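/- arXiv:2509.14428 — 2 statements merged into one kernel-verified Lean document; each statement's English description precedes it below -/
import Mathlib

section
/- Let X₁, X₂ be i.i.d. Gamma(α, β). Then E|X₁ − X₂| = 2Γ(α + 1/2)/(√π Γ(α) β), where β is the rate parameter. -/
open MeasureTheory Real ProbabilityTheory

open Set Filter Topology


lemma intOn_rpow_exp {s r : ℝ} (hs : 0 < s) (hr : 0 < r) :
    IntegrableOn (fun x : ℝ => x ^ (s-1) * Real.exp (-(r*x))) (Set.Ioi 0) := by
  have h : IntegrableOn (fun x : ℝ => Real.exp (-x) * x ^ (s-1)) (Ioi 0) :=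
    Real.GammaIntegral_convergent hs
  have h2 : IntegrableOn (fun x : ℝ => Real.exp (-(r*x)) * (r*x) ^ (s-1)) (Ioi 0) := by
    have := (integrableOn_Ioi_comp_mul_left_iff
      (fun x => Real.exp (-x) * x ^ (s-1)) 0 hr).mpr (by simpa using h)
    simpa using this
  have h3 := h2.const_mul ((r : ℝ) ^ (s-1))⁻¹
  refine IntegrableOn.congr_fun h3 ?_ measurableSet_Ioi
  intro x hx
  simp only []
  rw [Real.mul_rpow hr.le (le_of_lt hx)]
  field_simp [(Real.rpow_pos_of_pos hr (s-1)).ne']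


noncomputable def Ffun (α t : ℝ) : ℝ := t ^ α * (1+t) ^ (-(2*α))
noncomputable def Gfun (α t : ℝ) : ℝ :=
  if t ≤ 1 then Ffun α t else 2^(1-2*α) - Ffun α t

lemma hasDerivAt_Ffun {α t : ℝ} (ht : 0 < t) :
    HasDerivAt (Ffun α) (α * (t^(α-1) * (1-t) * (1+t)^(-(2*α+1)))) t := by
  have h1 : HasDerivAt (fun t : ℝ => t ^ α) (α * t ^ (α-1)) t :=
    Real.hasDerivAt_rpow_const (Or.inl ht.ne')
  have h2 : HasDerivAt (fun t : ℝ => (1+t) ^ (-(2*α)))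
      (1 * (-(2*α)) * (1+t) ^ (-(2*α)-1)) t :=
    HasDerivAt.rpow_const ((hasDerivAt_id t).const_add 1) (Or.inl (by positivity))
  have h := h1.mul h2
  refine HasDerivAt.congr_deriv (f := Ffun α) h ?_
  have e1 : t ^ α = t ^ (α-1) * t := by
    rw [← Real.rpow_add_one ht.ne']; ring_nf
  have e2 : (1+t) ^ (-(2*α)) = (1+t) ^ (-(2*α+1)) * (1+t) := by
    rw [← Real.rpow_add_one (by positivity)]; ring_nf
  have e3 : (-(2*α)-1 : ℝ) = -(2*α+1) := by ring
  rw [e3, e1, e2]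
  ring

lemma contF0 {α : ℝ} (hα : 0 < α) : ContinuousWithinAt (Ffun α) (Ici 0) 0 := by
  apply ContinuousWithinAt.mul
  · exact (Real.continuousAt_rpow_const 0 α (Or.inr hα.le)).continuousWithinAt
  · apply ContinuousAt.continuousWithinAt
    apply ContinuousAt.rpow_const (by fun_prop)
    norm_num

lemma tendsto_Ffun {α : ℝ} (hα : 0 < α) : Tendsto (Ffun α) atTop (𝓝 0) := by
  have hb : Tendsto (fun t : ℝ => (1+t) ^ (-α)) atTop (𝓝 0) := by
    apply Filter.Tendsto.comp (tendsto_rpow_neg_atTop hα)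
    exact tendsto_atTop_add_const_left _ 1 tendsto_id
  apply squeeze_zero_norm' ?_ hb
  filter_upwards [eventually_ge_atTop (0:ℝ)] with t ht
  have h1t : (0:ℝ) ≤ 1 + t := by linarith
  have hF : 0 ≤ Ffun α t := by unfold Ffun; positivity
  rw [Real.norm_eq_abs, abs_of_nonneg hF]
  unfold Ffun
  have h2 : t ^ α ≤ (1+t) ^ α := Real.rpow_le_rpow ht (by linarith) hα.le
  calc t ^ α * (1+t) ^ (-(2*α)) ≤ (1+t) ^ α * (1+t) ^ (-(2*α)) := by
        apply mul_le_mul_of_nonneg_right h2 (by positivity)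
    _ = (1+t) ^ (-α) := by rw [← Real.rpow_add (by linarith)]; ring_nf




lemma Ffun_one (α : ℝ) : Ffun α 1 = 2 ^ (-(2*α)) := by
  unfold Ffun; norm_num

lemma hasDerivAt_Gfun {α t : ℝ} (ht : 0 < t) :
    HasDerivAt (Gfun α) (α * (t^(α-1) * |1-t| * (1+t)^(-(2*α+1)))) t := by
  rcases lt_trichotomy t 1 with h | h | h
  · have habs : |1 - t| = 1 - t := abs_of_pos (by linarith)
    rw [habs]
    apply (hasDerivAt_Ffun ht).congr_of_eventuallyEq
    filter_upwards [eventually_lt_nhds h] with s hs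
    simp [Gfun, hs.le]
  · subst h
    have habs : |1 - (1:ℝ)| = 0 := by norm_num
    rw [habs]
    have hd : HasDerivAt (Ffun α) 0 1 := by
      have := hasDerivAt_Ffun (α := α) one_pos
      simpa using this
    have h1 : HasDerivWithinAt (Gfun α) 0 (Iic 1) 1 := by
      apply (hd.hasDerivWithinAt (s := Iic 1)).congr
      · intro s hs; simp [Gfun, (mem_Iic.mp hs)]
      · simp [Gfun]
    have h2 : HasDerivWithinAt (Gfun α) 0 (Ici 1) 1 := by
      have hd2 : HasDerivAt (fun s => 2^(1-2*α) - Ffun α s) 0 1 := by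
        simpa using (hd.const_sub (2^(1-2*α)))
      apply (hd2.hasDerivWithinAt (s := Ici 1)).congr
      · intro s hs
        rcases eq_or_lt_of_le (mem_Ici.mp hs) with h' | h'
        · subst h'
          have h2p : (2:ℝ)^(1-2*α) = 2 * 2^(-(2*α)) := by
            rw [show (1-2*α) = 1 + -(2*α) by ring, Real.rpow_add two_pos, Real.rpow_one]
          simp only [Gfun, le_refl, if_pos, Ffun_one, h2p]; ring
        · simp [Gfun, not_le.mpr h']
      · have h2p : (2:ℝ)^(1-2*α) = 2 * 2^(-(2*α)) := by
          rw [show (1-2*α) = 1 + -(2*α) by ring, Real.rpow_add two_pos, Real.rpow_one]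
        simp only [Gfun, le_refl, if_pos, Ffun_one, h2p]; ring
    have := h1.union h2
    rw [Iic_union_Ici] at this
    rw [hasDerivWithinAt_univ] at this
    simpa [mul_zero] using this
  · have habs : |1 - t| = t - 1 := by
      rw [abs_of_neg (by linarith)]; ring
    rw [habs]
    have hd2 : HasDerivAt (fun s => 2^(1-2*α) - Ffun α s)
        (-(α * (t^(α-1) * (1-t) * (1+t)^(-(2*α+1))))) t := (hasDerivAt_Ffun ht).const_sub _
    have : α * (t^(α-1) * (t-1) * (1+t)^(-(2*α+1)))
        = -(α * (t^(α-1) * (1-t) * (1+t)^(-(2*α+1)))) := by ring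
    rw [this]
    apply hd2.congr_of_eventuallyEq
    filter_upwards [eventually_gt_nhds h] with s hs
    simp [Gfun, not_le.mpr hs]





lemma contG0 {α : ℝ} (hα : 0 < α) : ContinuousWithinAt (Gfun α) (Ici 0) 0 := by
  have hF : ContinuousAt (Ffun α) 0 := by
    apply ContinuousAt.mul
    · exact Real.continuousAt_rpow_const 0 α (Or.inr hα.le)
    · exact ContinuousAt.rpow_const (by fun_prop) (by norm_num)
  have heq : Gfun α =ᶠ[𝓝 0] Ffun α := by
    filter_upwards [eventually_lt_nhds (show (0:ℝ) < 1 by norm_num)] with t ht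
    simp [Gfun, ht.le]
  exact (hF.congr heq.symm).continuousWithinAt

lemma tendsto_Gfun {α : ℝ} (hα : 0 < α) : Tendsto (Gfun α) atTop (𝓝 (2^(1-2*α))) := by
  have h : Tendsto (fun t => 2^(1-2*α) - Ffun α t) atTop (𝓝 (2^(1-2*α) - 0)) :=
    tendsto_const_nhds.sub (tendsto_Ffun hα)
  rw [sub_zero] at h
  apply h.congr'
  filter_upwards [eventually_gt_atTop (1:ℝ)] with t ht
  simp [Gfun, not_le.mpr ht]

lemma M_integrableOn_aux {α : ℝ} (hα : 0 < α) :
    IntegrableOn (fun t : ℝ => α * (t^(α-1) * |1-t| * (1+t)^(-(2*α+1)))) (Ioi 0) :=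
  integrableOn_Ioi_deriv_of_nonneg (contG0 hα) (fun t ht => hasDerivAt_Gfun ht)
    (fun t ht => by have : (0:ℝ) < t := ht; positivity) (tendsto_Gfun hα)

lemma M_value_aux {α : ℝ} (hα : 0 < α) :
    ∫ t in Ioi (0:ℝ), α * (t^(α-1) * |1-t| * (1+t)^(-(2*α+1))) = 2^(1-2*α) := by
  rw [integral_Ioi_of_hasDerivAt_of_tendsto (contG0 hα) (fun t ht => hasDerivAt_Gfun ht)
    (M_integrableOn_aux hα) (tendsto_Gfun hα)]
  have : Gfun α 0 = 0 := by
    simp [Gfun, Ffun, Real.zero_rpow hα.ne']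
  rw [this, sub_zero]





lemma final_algebra (α β : ℝ) (hα : 0 < α) (hβ : 0 < β) :
    (β ^ α / Real.Gamma α)^2 * Real.Gamma (2*α+1) * (1/β)^(2*α+1) / α * 2^(1-2*α)
      = 2 * Real.Gamma (α + 1 / 2) / (Real.sqrt π * Real.Gamma α * β) := by
  have hΓ : 0 < Real.Gamma α := Real.Gamma_pos_of_pos hα
  have hπ : 0 < Real.sqrt π := Real.sqrt_pos.mpr Real.pi_pos
  have h2ne : (2:ℝ)*α ≠ 0 := by positivity
  have h2α : Real.Gamma (2*α+1) = 2*α * Real.Gamma (2*α) := Real.Gamma_add_one h2ne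
  have hdup := Real.Gamma_mul_Gamma_add_half α
  have hpow : (0:ℝ) < 2^(1-2*α) := Real.rpow_pos_of_pos two_pos _
  have hG2 : Real.Gamma (2*α) = Real.Gamma α * Real.Gamma (α+1/2) / (2^(1-2*α) * Real.sqrt π) := by
    field_simp at hdup ⊢
    linarith [hdup]
  have hβα : (0:ℝ) < β ^ α := Real.rpow_pos_of_pos hβ _
  have hβ2α : (0:ℝ) < β ^ (2*α) := Real.rpow_pos_of_pos hβ _
  have hsq : (β ^ α)^2 = β ^ (2*α) := by
    rw [sq, ← Real.rpow_add hβ]; ring_nf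
  have hβinv : (1/β)^(2*α+1) = (β ^ (2*α) * β)⁻¹ := by
    rw [one_div, Real.inv_rpow hβ.le, ← Real.rpow_add_one hβ.ne']
  rw [div_pow, hsq, h2α, hG2, hβinv]
  field_simp

theorem stmt_11 (α β : ℝ) (hα : 0 < α) (hβ : 0 < β) :
    ∫ p : ℝ × ℝ, |p.1 - p.2| ∂((gammaMeasure α β).prod (gammaMeasure α β)) =
      2 * Real.Gamma (α + 1 / 2) / (Real.sqrt π * Real.Gamma α * β) := by
  have hΓ : 0 < Real.Gamma α := Real.Gamma_pos_of_pos hα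
  have hΓ2 : 0 < Real.Gamma (2*α+1) := Real.Gamma_pos_of_pos (by positivity)
  set c : ℝ := β ^ α / Real.Gamma α with hc_def
  have hc : 0 < c := by positivity
  set φ : ℝ → ℝ := fun x => x ^ (α-1) * Real.exp (-(β*x)) with hφ_def
  have hφ_nonneg : ∀ x : ℝ, x ∈ Ioi (0:ℝ) → 0 ≤ φ x := fun x hx => by
    have : (0:ℝ) < x := hx; positivity
  have hφ_meas : Measurable φ := by fun_prop
  -- the gamma measure as a density on Ioi 0
  have hμ : gammaMeasure α β
      = (volume.restrict (Ioi 0)).withDensity (fun x => ENNReal.ofReal (c * φ x)) := by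
    rw [gammaMeasure, ← withDensity_indicator measurableSet_Ioi]
    apply withDensity_congr_ae
    filter_upwards [compl_mem_ae_iff.mpr (volume_singleton (a := (0:ℝ)))] with x hx
    rcases lt_trichotomy x 0 with h | h | h
    · rw [gammaPDF_of_neg h, indicator_of_notMem (by simp [h.not_gt])]
    · exact absurd h (by simpa using hx)
    · rw [gammaPDF_of_nonneg h.le, indicator_of_mem (mem_Ioi.mpr h)]
      congr 1
      simp only [hc_def, hφ_def]
      ring
  -- nonnegativity reduction to lintegral
  rw [integral_eq_lintegral_of_nonneg_ae (f := fun p : ℝ × ℝ => |p.1 - p.2|) (ae_of_all _ fun p => abs_nonneg _)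
    ((continuous_abs.comp (continuous_fst.sub continuous_snd)).aestronglyMeasurable)]
  have habs_meas : Measurable fun p : ℝ × ℝ => ENNReal.ofReal |p.1 - p.2| :=
    (measurable_fst.sub measurable_snd).abs.ennreal_ofReal
  rw [hμ]
  set ν := (volume.restrict (Ioi (0:ℝ))).withDensity (fun x => ENNReal.ofReal (c * φ x)) with hν
  rw [lintegral_prod _ habs_meas.aemeasurable]
  -- unfold the densities
  have hd_meas : Measurable fun x => ENNReal.ofReal (c * φ x) := by fun_prop
  have hinner_meas : Measurable fun y => ∫⁻ x in Ioi 0,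
      ENNReal.ofReal (c * φ x) * ENNReal.ofReal |y - x| := by
    apply Measurable.lintegral_prod_right (f := fun y x =>
      ENNReal.ofReal (c * φ x) * ENNReal.ofReal |y - x|)
    refine Measurable.mul (f := fun p : ℝ × ℝ => ENNReal.ofReal (c * φ p.2))
      (g := fun p : ℝ × ℝ => ENNReal.ofReal |p.1 - p.2|) ?_ ?_
    · exact hd_meas.comp measurable_snd
    · exact ((measurable_fst.sub measurable_snd).abs.ennreal_ofReal)
  have hstep1 : ∀ y : ℝ, (∫⁻ x, ENNReal.ofReal |y - x| ∂ν)
      = ∫⁻ x in Ioi 0, ENNReal.ofReal (c * φ x) * ENNReal.ofReal |y - x| := by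
    intro y
    rw [hν]
    exact lintegral_withDensity_eq_lintegral_mul _ hd_meas (by fun_prop)
  simp_rw [hstep1]
  rw [hν, lintegral_withDensity_eq_lintegral_mul _ hd_meas hinner_meas]
  -- key pointwise computation for y > 0
  set W : ℝ → ℝ → ℝ := fun y t =>
    c^2 * (y^(2*α) * Real.exp (-(β*y)) * (t^(α-1) * |1-t| * Real.exp (-(β*y*t)))) with hW_def
  have key : ∀ y ∈ Ioi (0:ℝ), ENNReal.ofReal (c * φ y)
      * (∫⁻ x in Ioi 0, ENNReal.ofReal (c * φ x) * ENNReal.ofReal |y - x|)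
      = ∫⁻ t in Ioi 0, ENNReal.ofReal (W y t) := by
    intro y hy
    have hy0 : (0:ℝ) < y := hy
    have hβy : 0 < β * y := by positivity
    have hint1 : IntegrableOn (fun x : ℝ => c * φ x * |y - x|) (Ioi 0) := by
      have b1 := (intOn_rpow_exp (show (0:ℝ) < α+1 by linarith) hβ).const_mul c
      have b2 := (intOn_rpow_exp hα hβ).const_mul (c*y)
      apply Integrable.mono (b1.add b2)
        (((hφ_meas.const_mul c).mul ((measurable_const.sub measurable_id).abs)).aestronglyMeasurable)
      filter_upwards [ae_restrict_mem measurableSet_Ioi] with x hx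
      have hx0 : (0:ℝ) < x := hx
      have hφx : 0 ≤ φ x := hφ_nonneg x hx
      have h1 : |y - x| ≤ y + x := abs_le.mpr ⟨by linarith, by linarith⟩
      have hn : 0 ≤ c * φ x * |y - x| :=
        mul_nonneg (mul_nonneg hc.le hφx) (abs_nonneg _)
      have hrhs : 0 ≤ c * (x^((α+1)-1) * Real.exp (-(β*x)))
          + c*y*(x^(α-1) * Real.exp (-(β*x))) := by positivity
      simp only [Real.norm_eq_abs, Pi.add_apply, Pi.mul_apply, Pi.sub_apply, id_eq]
      rw [abs_of_nonneg hn, abs_of_nonneg hrhs]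
      calc c * φ x * |y - x| ≤ c * φ x * (y + x) :=
            mul_le_mul_of_nonneg_left h1 (mul_nonneg hc.le hφx)
        _ = c * (x^((α+1)-1) * Real.exp (-(β*x))) + c*y*(x^(α-1)*Real.exp (-(β*x))) := by
            simp only [hφ_def]
            rw [show (α+1)-1 = (α-1)+1 by ring, Real.rpow_add_one hx0.ne']
            ring
    have hnn1 : 0 ≤ᵐ[volume.restrict (Ioi (0:ℝ))] fun x => c * φ x * |y - x| := by
      filter_upwards [ae_restrict_mem measurableSet_Ioi] with x hx
      exact mul_nonneg (mul_nonneg hc.le (hφ_nonneg x hx)) (abs_nonneg _)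
    have heq1 : (∫⁻ x in Ioi 0, ENNReal.ofReal (c * φ x) * ENNReal.ofReal |y - x|)
        = ENNReal.ofReal (∫ x in Ioi 0, c * φ x * |y - x|) := by
      rw [ofReal_integral_eq_lintegral_ofReal hint1 hnn1]
      refine setLIntegral_congr_fun measurableSet_Ioi (fun x hx => ?_)
      rw [← ENNReal.ofReal_mul (mul_nonneg hc.le (hφ_nonneg x hx))]
    have hsub := integral_comp_mul_left_Ioi (fun x => c * φ x * |y - x|) 0 hy0
    rw [mul_zero, smul_eq_mul] at hsub
    have hcongr : ∫ t in Ioi (0:ℝ), c * φ (y*t) * |y - y*t|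
        = ∫ t in Ioi (0:ℝ), (c * (y^(α-1) * y)) * (t^(α-1) * |1-t| * Real.exp (-(β*y*t))) := by
      refine setIntegral_congr_fun measurableSet_Ioi fun t ht => ?_
      have ht0 : (0:ℝ) < t := ht
      simp only [hφ_def]
      rw [Real.mul_rpow hy0.le ht0.le,
        show y - y*t = y*(1-t) by ring, abs_mul, abs_of_pos hy0,
        show β*(y*t) = β*y*t by ring]
      ring
    have hy_pow : y^(α+1) = y^(α-1) * y * y := by
      rw [show α+1 = ((α-1)+1)+1 by ring, Real.rpow_add_one hy0.ne',
        Real.rpow_add_one hy0.ne']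
    have hM : ∫ x in Ioi (0:ℝ), c * φ x * |y - x|
        = c * y^(α+1) * ∫ t in Ioi 0, t^(α-1)*|1-t| *Real.exp (-(β*y*t)) := by
      rw [hcongr, integral_const_mul] at hsub
      have hA : ∫ x in Ioi (0:ℝ), c * φ x * |y - x|
          = y * ((c * (y^(α-1) * y)) * ∫ t in Ioi 0, t^(α-1)*|1-t| *Real.exp (-(β*y*t))) := by
        rw [hsub]
        field_simp
      rw [hA, hy_pow]
      ring
    have hinth : IntegrableOn (fun t : ℝ => t^(α-1)*|1-t| *Real.exp (-(β*y*t))) (Ioi 0) := by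
      have b1 := intOn_rpow_exp (show (0:ℝ) < α+1 by linarith) hβy
      have b2 := intOn_rpow_exp hα hβy
      apply Integrable.mono (b1.add b2)
        ((by fun_prop : Measurable fun t : ℝ => t^(α-1)*|1-t| *Real.exp (-(β*y*t))).aestronglyMeasurable)
      filter_upwards [ae_restrict_mem measurableSet_Ioi] with t ht
      have ht0 : (0:ℝ) < t := ht
      have h1 : |1 - t| ≤ 1 + t := abs_le.mpr ⟨by linarith, by linarith⟩
      have hn : 0 ≤ t^(α-1)*|1-t| *Real.exp (-(β*y*t)) := by positivity
      have hrhs : 0 ≤ t^((α+1)-1) * Real.exp (-(β*y*t))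
          + t^(α-1) * Real.exp (-(β*y*t)) := by positivity
      simp only [Real.norm_eq_abs, Pi.add_apply, id_eq]
      rw [abs_of_nonneg hn]
      calc t^(α-1)*|1-t| *Real.exp (-(β*y*t))
          ≤ t^(α-1)*(1+t)*Real.exp (-(β*y*t)) := by
            apply mul_le_mul_of_nonneg_right _ (Real.exp_pos _).le
            exact mul_le_mul_of_nonneg_left h1 (by positivity)
        _ = t^((α+1)-1) * Real.exp (-(β*y*t)) + t^(α-1) * Real.exp (-(β*y*t)) := by
            rw [show (α+1)-1 = (α-1)+1 by ring, Real.rpow_add_one ht0.ne']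
            ring
        _ ≤ |t^((α+1)-1) * Real.exp (-(β*y*t)) + t^(α-1) * Real.exp (-(β*y*t))| :=
            le_abs_self _
    have hnnh : 0 ≤ᵐ[volume.restrict (Ioi (0:ℝ))]
        fun t => t^(α-1)*|1-t| *Real.exp (-(β*y*t)) := by
      filter_upwards [ae_restrict_mem measurableSet_Ioi] with t ht
      have ht0 : (0:ℝ) < t := ht
      positivity
    have hMnonneg : 0 ≤ ∫ t in Ioi (0:ℝ), t^(α-1)*|1-t| *Real.exp (-(β*y*t)) :=
      setIntegral_nonneg measurableSet_Ioi fun t ht => by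
        have ht0 : (0:ℝ) < t := ht; positivity
    rw [heq1, hM]
    have hcy : 0 ≤ c * y^(α+1) := mul_nonneg hc.le (Real.rpow_nonneg hy0.le _)
    have hsplit : ENNReal.ofReal (c * y^(α+1) * ∫ t in Ioi (0:ℝ), t^(α-1)*|1-t| *Real.exp (-(β*y*t)))
        = ENNReal.ofReal (c * y^(α+1))
          * ENNReal.ofReal (∫ t in Ioi (0:ℝ), t^(α-1)*|1-t| *Real.exp (-(β*y*t))) := by
      rw [← ENNReal.ofReal_mul hcy]
    rw [hsplit, ofReal_integral_eq_lintegral_ofReal hinth hnnh, ← mul_assoc,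
      ← ENNReal.ofReal_mul (mul_nonneg hc.le (hφ_nonneg y hy)),
      ← lintegral_const_mul' _ _ ENNReal.ofReal_ne_top]
    refine setLIntegral_congr_fun measurableSet_Ioi (fun t ht => ?_)
    have ht0 : (0:ℝ) < t := ht
    rw [← ENNReal.ofReal_mul (by positivity : (0:ℝ) ≤ c * φ y * (c * y^(α+1)))]
    congr 1
    simp only [hW_def, hφ_def]
    have hyy : y^(α-1) * y^(α+1) = y^(2*α) := by
      rw [← Real.rpow_add hy0]; ring_nf
    rw [← hyy]
    ring
  simp only [Pi.mul_apply]
  rw [setLIntegral_congr_fun measurableSet_Ioi key]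
  rw [lintegral_lintegral_swap (by fun_prop)]
  set C4 : ℝ := c^2 * Real.Gamma (2*α+1) * (1/β)^(2*α+1) / α with hC4_def
  have hC4 : 0 ≤ C4 := by positivity
  have keyT : ∀ t ∈ Ioi (0:ℝ), (∫⁻ y in Ioi 0, ENNReal.ofReal (W y t))
      = ENNReal.ofReal (C4 * (α * (t^(α-1) * |1-t| * (1+t)^(-(2*α+1))))) := by
    intro t ht
    have ht0 : (0:ℝ) < t := ht
    have h1t : (0:ℝ) < 1 + t := by linarith
    have hr : 0 < β * (1+t) := by positivity
    have h2α1 : (0:ℝ) < 2*α+1 := by linarith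
    have hcn : 0 ≤ c^2 * (t^(α-1) * |1-t|) :=
      mul_nonneg (sq_nonneg c) (mul_nonneg (Real.rpow_nonneg ht0.le _) (abs_nonneg _))
    have hWeq : ∀ y ∈ Ioi (0:ℝ), ENNReal.ofReal (W y t)
        = ENNReal.ofReal (c^2 * (t^(α-1) * |1-t|))
          * ENNReal.ofReal (y^((2*α+1)-1) * Real.exp (-((β*(1+t))*y))) := by
      intro y hy
      have hy0 : (0:ℝ) < y := hy
      rw [← ENNReal.ofReal_mul hcn]
      congr 1
      simp only [hW_def]
      rw [show (2*α+1)-1 = 2*α by ring,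
        show -((β*(1+t))*y) = -(β*y) + -(β*y*t) by ring, Real.exp_add]
      ring
    rw [setLIntegral_congr_fun measurableSet_Ioi hWeq,
      lintegral_const_mul' _ _ ENNReal.ofReal_ne_top]
    have hnn : 0 ≤ᵐ[volume.restrict (Ioi (0:ℝ))]
        fun y => y^((2*α+1)-1) * Real.exp (-((β*(1+t))*y)) := by
      filter_upwards [ae_restrict_mem measurableSet_Ioi] with y hy
      have hy0 : (0:ℝ) < y := hy
      positivity
    rw [← ofReal_integral_eq_lintegral_ofReal (intOn_rpow_exp h2α1 hr) hnn]
    rw [integral_rpow_mul_exp_neg_mul_Ioi h2α1 hr]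
    rw [← ENNReal.ofReal_mul hcn]
    congr 1
    have hsplit : (1/(β*(1+t)))^(2*α+1) = (1/β)^(2*α+1) * (1+t)^(-(2*α+1)) := by
      rw [Real.rpow_neg h1t.le, one_div, mul_inv,
        Real.mul_rpow (inv_nonneg.mpr hβ.le) (inv_nonneg.mpr h1t.le),
        Real.inv_rpow h1t.le, one_div, Real.inv_rpow hβ.le]
    rw [hsplit, hC4_def]
    field_simp
  rw [setLIntegral_congr_fun measurableSet_Ioi keyT]
  have hfin : ∀ t ∈ Ioi (0:ℝ), ENNReal.ofReal (C4 * (α * (t^(α-1) * |1-t| * (1+t)^(-(2*α+1)))))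
      = ENNReal.ofReal C4 * ENNReal.ofReal (α * (t^(α-1) * |1-t| * (1+t)^(-(2*α+1)))) :=
    fun t ht => ENNReal.ofReal_mul hC4
  rw [setLIntegral_congr_fun measurableSet_Ioi hfin,
    lintegral_const_mul' _ _ ENNReal.ofReal_ne_top]
  have hnnM : 0 ≤ᵐ[volume.restrict (Ioi (0:ℝ))]
      fun t => α * (t^(α-1) * |1-t| * (1+t)^(-(2*α+1))) := by
    filter_upwards [ae_restrict_mem measurableSet_Ioi] with t ht
    have ht0 : (0:ℝ) < t := ht
    have h1t : (0:ℝ) < 1 + t := by linarith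
    positivity
  rw [← ofReal_integral_eq_lintegral_ofReal (M_integrableOn_aux hα) hnnM, M_value_aux hα,
    ← ENNReal.ofReal_mul hC4, ENNReal.toReal_ofReal
      (mul_nonneg hC4 (Real.rpow_nonneg two_pos.le _))]
  rw [hC4_def, hc_def]
  exact final_algebra α β hα hβ
end

section
/- Let X₁,…,Xₙ be i.i.d. nonnegative random variables with P(X₁ = 0) = 0, distribution F, and Laplace transform L. Then for n ≥ 2, E[(∑_{i≠j}|Xᵢ−Xⱼ|)/(2(n−1)Sₙ)] = (n/2) ∫₀^∞ GMD(F^{(λ)}) L(λ)ⁿ dλ, where Sₙ = ∑ᵢXᵢ and GMD(F^{(λ)}) = E_{F^{(λ)}}|Y₁−Y₂| for Y₁,Y₂ i.i.d. from the tilted law F^{(λ)}. -/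
open MeasureTheory Real ProbabilityTheory

private lemma texp_le {l t : ℝ} (hl : 0 < l) (ht : 0 ≤ t) :
    t * Real.exp (-(l * t)) ≤ 1 / l := by
  have h1 : l * t ≤ Real.exp (l * t) := by
    have := Real.add_one_le_exp (l * t); linarith
  have h2 : t ≤ Real.exp (l * t) / l := by
    rw [le_div_iff₀ hl]; nlinarith
  calc t * Real.exp (-(l * t)) ≤ (Real.exp (l * t) / l) * Real.exp (-(l * t)) :=
        mul_le_mul_of_nonneg_right h2 (Real.exp_pos _).le
    _ = 1 / l := by
        rw [div_mul_eq_mul_div, ← Real.exp_add]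
        simp

private lemma lintegral_indep_prod {Ω : Type*} [MeasurableSpace Ω] (μ : Measure Ω)
    [IsProbabilityMeasure μ] {n : ℕ} (X : Fin n → Ω → ℝ) (hXm : ∀ i, Measurable (X i))
    (hindep : iIndepFun X μ)
    (g : ℝ → ENNReal) (hg : Measurable g) (s : Finset (Fin n)) :
    ∫⁻ ω, ∏ k ∈ s, g (X k ω) ∂μ = ∏ k ∈ s, ∫⁻ ω, g (X k ω) ∂μ := by
  classical
  induction s using Finset.induction_on with
  | empty => simp
  | @insert a s ha ih =>
    rw [Finset.prod_insert ha]
    have base := hindep.indepFun_finset {a} s (Finset.disjoint_singleton_left.mpr ha) hXm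
    have hφ : Measurable fun v : {x // x ∈ ({a} : Finset (Fin n))} → ℝ =>
        g (v ⟨a, Finset.mem_singleton_self a⟩) := hg.comp (measurable_pi_apply _)
    have hψ : Measurable fun v : {x // x ∈ s} → ℝ => ∏ k : {x // x ∈ s}, g (v k) :=
      Finset.measurable_prod _ fun k _ => hg.comp (measurable_pi_apply _)
    have ind := base.comp hφ hψ
    have heq : ∀ ω, (∏ k ∈ s, g (X k ω)) = ∏ k : s, g (X k ω) := fun ω =>
      (Finset.prod_coe_sort s fun k => g (X k ω)).symm
    have hmul : ∫⁻ ω, g (X a ω) * ∏ k ∈ s, g (X k ω) ∂μ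
        = (∫⁻ ω, g (X a ω) ∂μ) * ∫⁻ ω, ∏ k ∈ s, g (X k ω) ∂μ := by
      simp_rw [heq]
      exact lintegral_mul_eq_lintegral_mul_lintegral_of_indepFun''
        (hg.comp (hXm a)).aemeasurable (Finset.measurable_prod Finset.univ (fun (k : {x // x ∈ s}) _ => hg.comp (hXm k)) : Measurable fun ω => ∏ k : {x // x ∈ s}, g (X k ω)).aemeasurable ind
    simp_rw [Finset.prod_insert ha, hmul, ih]

set_option maxHeartbeats 2000000 in
theorem stmt_13 {Ω : Type*} [MeasurableSpace Ω] (μ : Measure Ω) [IsProbabilityMeasure μ]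
    (F : Measure ℝ) [IsProbabilityMeasure F]
    (hFnn : F (Set.Iio 0) = 0) (hF0 : F {0} = 0)
    (n : ℕ) (hn : 2 ≤ n) (X : Fin n → Ω → ℝ)
    (hXm : ∀ i, Measurable (X i))
    (hindep : iIndepFun X μ)
    (hlaw : ∀ i, μ.map (X i) = F)
    (L : ℝ → ℝ) (hL : ∀ l, L l = ∫ x, Real.exp (-l * x) ∂F)
    (Ft : ℝ → Measure ℝ)
    (hFt : ∀ l, Ft l = F.withDensity (fun x => ENNReal.ofReal (Real.exp (-l * x) / L l)))
    (GMD : ℝ → ℝ)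
    (hGMD : ∀ l, GMD l = ∫ p : ℝ × ℝ, |p.1 - p.2| ∂((Ft l).prod (Ft l)))
    (hint : Integrable (fun ω =>
      (∑ p ∈ Finset.univ.offDiag, |X p.1 ω - X p.2 ω|) / (2 * ((n : ℝ) - 1) * ∑ i, X i ω)) μ)
    (hint' : IntegrableOn (fun l => GMD l * L l ^ n) (Set.Ioi 0)) :
    ∫ ω, (∑ p ∈ Finset.univ.offDiag, |X p.1 ω - X p.2 ω|) /
        (2 * ((n : ℝ) - 1) * ∑ i, X i ω) ∂μ =
      (n / 2) * ∫ l in Set.Ioi (0 : ℝ), GMD l * L l ^ n := by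
  classical
  set A : Ω → ℝ := fun ω => ∑ p ∈ Finset.univ.offDiag, |X p.1 ω - X p.2 ω| with hA
  set S : Ω → ℝ := fun ω => ∑ i, X i ω with hSdef
  set c : ℝ := 2 * ((n : ℝ) - 1) with hc
  have hn1 : (2:ℝ) ≤ (n:ℝ) := by exact_mod_cast hn
  have hcpos : 0 < c := by rw [hc]; nlinarith
  have hAm : Measurable A := Finset.measurable_sum _ fun p _ => ((hXm p.1).sub (hXm p.2)).abs
  have hAnn : ∀ ω, 0 ≤ A ω := fun ω => Finset.sum_nonneg fun p _ => abs_nonneg _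
  have hSm : Measurable S := Finset.measurable_sum _ fun i _ => hXm i
  have hFae : ∀ᵐ x ∂F, 0 ≤ x := by
    rw [ae_iff]
    have : {x : ℝ | ¬ 0 ≤ x} = Set.Iio 0 := by ext x; simp
    rw [this]; exact hFnn
  have hXpos : ∀ᵐ ω ∂μ, ∀ i, 0 < X i ω := by
    rw [ae_all_iff]
    intro i
    rw [ae_iff]
    have h1 : {ω | ¬ 0 < X i ω} = X i ⁻¹' (Set.Iic 0) := by ext ω; simp
    rw [h1, ← Measure.map_apply (hXm i) measurableSet_Iic, hlaw i]
    have h2 : Set.Iic (0:ℝ) = Set.Iio 0 ∪ {0} := by ext x; simp [le_iff_lt_or_eq]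
    rw [h2]
    exact le_antisymm ((measure_union_le _ _).trans (by simp [hFnn, hF0])) (zero_le)
  have hSpos : ∀ᵐ ω ∂μ, 0 < S ω :=
    hXpos.mono fun ω h => Finset.sum_pos (fun i _ => h i) ⟨⟨0, by omega⟩, Finset.mem_univ _⟩
  have hLnn : ∀ l, 0 ≤ L l := fun l => (hL l) ▸ integral_nonneg fun x => (Real.exp_pos _).le
  have hGMDnn : ∀ l, 0 ≤ GMD l := fun l => (hGMD l) ▸ integral_nonneg fun p => abs_nonneg _
  have hgm : ∀ l : ℝ, Measurable fun x : ℝ => ENNReal.ofReal (Real.exp (-l * x)) := fun l =>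
    ENNReal.measurable_ofReal.comp (Real.measurable_exp.comp (measurable_id.const_mul (-l)))
  have hexpInt : ∀ l : ℝ, 0 < l → Integrable (fun x => Real.exp (-l * x)) F := by
    intro l hl
    refine Integrable.mono' (integrable_const 1)
      ((Real.measurable_exp.comp (measurable_id.const_mul (-l))).aestronglyMeasurable) ?_
    filter_upwards [hFae] with x hx
    rw [Real.norm_eq_abs, abs_of_pos (Real.exp_pos _)]
    exact Real.exp_le_one_iff.mpr (by nlinarith)
  have hLpos : ∀ l : ℝ, 0 < l → 0 < L l := by
    intro l hl
    rw [hL l]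
    rw [integral_pos_iff_support_of_nonneg (fun x => (Real.exp_pos _).le) (hexpInt l hl)]
    have : Function.support (fun x : ℝ => Real.exp (-l * x)) = Set.univ := by
      ext x; simp [Real.exp_ne_zero]
    rw [this]; simp
  have hLof : ∀ l : ℝ, 0 < l →
      ∫⁻ x, ENNReal.ofReal (Real.exp (-l * x)) ∂F = ENNReal.ofReal (L l) := by
    intro l hl
    rw [hL]
    exact (ofReal_integral_eq_lintegral_ofReal (hexpInt l hl)
      (ae_of_all _ fun x => (Real.exp_pos _).le)).symm
  have hXL : ∀ (l : ℝ), 0 < l → ∀ k,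
      ∫⁻ ω, ENNReal.ofReal (Real.exp (-l * X k ω)) ∂μ = ENNReal.ofReal (L l) := by
    intro l hl k
    have : ∫⁻ ω, ENNReal.ofReal (Real.exp (-l * X k ω)) ∂μ
        = ∫⁻ x, ENNReal.ofReal (Real.exp (-l * x)) ∂(μ.map (X k)) :=
      (lintegral_map (hgm l) (hXm k)).symm
    rw [this, hlaw k, hLof l hl]
  have hprodae : ∀ᵐ q ∂(F.prod F), 0 ≤ q.1 ∧ 0 ≤ q.2 := by
    rw [ae_iff]
    refine measure_mono_null (t := (Set.Iio 0 ×ˢ Set.univ) ∪ (Set.univ ×ˢ Set.Iio 0)) ?_ ?_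
    · intro q hq
      simp only [Set.mem_setOf_eq, not_and_or, not_le] at hq
      rcases hq with h | h
      · exact Or.inl (by simp [h])
      · exact Or.inr (by simp [h])
    · refine measure_union_null ?_ ?_ <;> rw [Measure.prod_prod] <;> simp [hFnn]
  -- the key kernel: T l
  set T : ℝ → ENNReal := fun l => ∫⁻ q : ℝ × ℝ,
    ENNReal.ofReal (|q.1 - q.2| * (Real.exp (-l * q.1) * Real.exp (-l * q.2))) ∂(F.prod F)
    with hT
  have hΦm : ∀ l : ℝ, Measurable fun q : ℝ × ℝ =>
      ENNReal.ofReal (|q.1 - q.2| * (Real.exp (-l * q.1) * Real.exp (-l * q.2))) := by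
    intro l
    apply ENNReal.measurable_ofReal.comp
    exact ((measurable_fst.sub measurable_snd).abs).mul
      ((Real.measurable_exp.comp (measurable_fst.const_mul (-l))).mul
        (Real.measurable_exp.comp (measurable_snd.const_mul (-l))))
  have hTfin : ∀ l : ℝ, 0 < l → T l ≤ ENNReal.ofReal (1 / l) := by
    intro l hl
    rw [hT]
    calc ∫⁻ q : ℝ × ℝ, ENNReal.ofReal (|q.1 - q.2| *
          (Real.exp (-l * q.1) * Real.exp (-l * q.2))) ∂(F.prod F)
        ≤ ∫⁻ _ : ℝ × ℝ, ENNReal.ofReal (1 / l) ∂(F.prod F) := by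
          refine lintegral_mono_ae ?_
          filter_upwards [hprodae] with q hq
          refine ENNReal.ofReal_le_ofReal ?_
          have h1 : |q.1 - q.2| ≤ q.1 + q.2 :=
            abs_sub_le_iff.mpr ⟨by linarith [hq.1, hq.2], by linarith [hq.1, hq.2]⟩
          have h2 : Real.exp (-l * q.1) * Real.exp (-l * q.2)
              = Real.exp (-(l * (q.1 + q.2))) := by rw [← Real.exp_add]; ring_nf
          calc |q.1 - q.2| * (Real.exp (-l * q.1) * Real.exp (-l * q.2))
              ≤ (q.1 + q.2) * Real.exp (-(l * (q.1 + q.2))) := by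
                rw [h2]; exact mul_le_mul_of_nonneg_right h1 (Real.exp_pos _).le
            _ ≤ 1 / l := texp_le hl (by linarith [hq.1, hq.2])
      _ = ENNReal.ofReal (1 / l) := by simp
  have hρm : ∀ l : ℝ, Measurable fun x : ℝ => ENNReal.ofReal (Real.exp (-l * x) / L l) :=
    fun l => ENNReal.measurable_ofReal.comp
      ((Real.measurable_exp.comp (measurable_id.const_mul (-l))).div_const (L l))
  have habs : Measurable fun q : ℝ × ℝ => ENNReal.ofReal |q.1 - q.2| :=
    ENNReal.measurable_ofReal.comp (measurable_fst.sub measurable_snd).abs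
  have hTeq : ∀ l : ℝ, 0 < l →
      ENNReal.ofReal (L l) ^ 2 * ENNReal.ofReal (GMD l) = T l := by
    intro l hl
    set oL := ENNReal.ofReal (L l) with hoL
    have hoL0 : oL ≠ 0 := by
      rw [hoL]; exact (ENNReal.ofReal_pos.mpr (hLpos l hl)).ne'
    have hoLtop : oL ≠ ⊤ := ENNReal.ofReal_ne_top
    haveI hsf : SFinite (Ft l) := by rw [hFt]; infer_instance
    have hkey : ∀ x y : ℝ, ENNReal.ofReal (Real.exp (-l * x) / L l) *
        (ENNReal.ofReal (Real.exp (-l * y) / L l) * ENNReal.ofReal |x - y|)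
        = (oL⁻¹ * oL⁻¹) *
          ENNReal.ofReal (|x - y| * (Real.exp (-l * x) * Real.exp (-l * y))) := by
      intro x y
      rw [ENNReal.ofReal_div_of_pos (hLpos l hl), ENNReal.ofReal_div_of_pos (hLpos l hl),
        ENNReal.ofReal_mul (abs_nonneg _), ENNReal.ofReal_mul (Real.exp_pos _).le,
        div_eq_mul_inv, div_eq_mul_inv, ← hoL]
      ring
    have hmeas2 : ∀ x : ℝ, Measurable fun y : ℝ =>
        ENNReal.ofReal (Real.exp (-l * y) / L l) * ENNReal.ofReal |x - y| :=
      fun x => (hρm l).mul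
        (show Measurable fun y : ℝ => ENNReal.ofReal |x - y| by fun_prop)
    have hTtilt : ∫⁻ q : ℝ × ℝ, ENNReal.ofReal |q.1 - q.2| ∂((Ft l).prod (Ft l))
        = (oL⁻¹ * oL⁻¹) * T l := by
      rw [lintegral_prod _ habs.aemeasurable]
      have hinner : ∀ x : ℝ, ∫⁻ y, ENNReal.ofReal |x - y| ∂(Ft l)
          = ∫⁻ y, ENNReal.ofReal (Real.exp (-l * y) / L l) * ENNReal.ofReal |x - y| ∂F := by
        intro x
        rw [hFt, lintegral_withDensity_eq_lintegral_mul F (hρm l)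
          (show Measurable fun y : ℝ => ENNReal.ofReal |x - y| by fun_prop)]
        rfl
      simp_rw [hinner]
      rw [hFt, lintegral_withDensity_eq_lintegral_mul F (hρm l)
        (show Measurable fun x : ℝ => ∫⁻ y, ENNReal.ofReal (Real.exp (-l * y) / L l)
            * ENNReal.ofReal |x - y| ∂F by
          exact Measurable.lintegral_prod_right' (f := fun q : ℝ × ℝ =>
            ENNReal.ofReal (Real.exp (-l * q.2) / L l) * ENNReal.ofReal |q.1 - q.2|)
            (by fun_prop))]
      have hpull : ∀ x : ℝ, (fun x => ENNReal.ofReal (Real.exp (-l * x) / L l)) x *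
          (fun x => ∫⁻ y, ENNReal.ofReal (Real.exp (-l * y) / L l)
            * ENNReal.ofReal |x - y| ∂F) x
          = (oL⁻¹ * oL⁻¹) * ∫⁻ y, ENNReal.ofReal (|x - y| *
              (Real.exp (-l * x) * Real.exp (-l * y))) ∂F := by
        intro x
        simp only []
        rw [← lintegral_const_mul _ (hmeas2 x)]
        simp_rw [hkey x]
        rw [lintegral_const_mul _ (show Measurable fun y : ℝ =>
          ENNReal.ofReal (|x - y| * (Real.exp (-l * x) * Real.exp (-l * y))) by fun_prop)]
      simp_rw [Pi.mul_apply, hpull]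
      rw [lintegral_const_mul _ (Measurable.lintegral_prod_right'
        (show Measurable fun q : ℝ × ℝ =>
          ENNReal.ofReal (|q.1 - q.2| * (Real.exp (-l * q.1) * Real.exp (-l * q.2)))
          by fun_prop))]
      congr 1
      simp only [hT]
      exact (lintegral_prod _ (hΦm l).aemeasurable).symm
    have hfin : (oL⁻¹ * oL⁻¹) * T l ≠ ⊤ :=
      ENNReal.mul_ne_top (ENNReal.mul_ne_top (ENNReal.inv_ne_top.mpr hoL0)
        (ENNReal.inv_ne_top.mpr hoL0)) ((hTfin l hl).trans_lt ENNReal.ofReal_lt_top).ne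
    have hGl : ENNReal.ofReal (GMD l) = (oL⁻¹ * oL⁻¹) * T l := by
      rw [hGMD l, integral_eq_lintegral_of_nonneg_ae (ae_of_all _ fun q => abs_nonneg _)
        ((show Continuous fun q : ℝ × ℝ => |q.1 - q.2| by fun_prop).aestronglyMeasurable), hTtilt,
        ENNReal.ofReal_toReal hfin]
    rw [hGl]
    calc oL ^ 2 * ((oL⁻¹ * oL⁻¹) * T l) = (oL * oL⁻¹) * ((oL * oL⁻¹) * T l) := by ring
      _ = T l := by rw [ENNReal.mul_inv_cancel hoL0 hoLtop]; simp
  have hpair : ∀ l : ℝ, 0 < l → ∀ i j : Fin n, i ≠ j →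
      ∫⁻ ω, ENNReal.ofReal (|X i ω - X j ω| * Real.exp (-l * S ω)) ∂μ
        = ENNReal.ofReal (GMD l * L l ^ n) := by
    intro l hl i j hij
    set rest : Finset (Fin n) := Finset.univ \ {i, j} with hrest
    have hi : i ∈ ({i, j} : Finset (Fin n)) := Finset.mem_insert_self _ _
    have hj : j ∈ ({i, j} : Finset (Fin n)) :=
      Finset.mem_insert_of_mem (Finset.mem_singleton_self _)
    have hcard2 : ({i, j} : Finset (Fin n)).card = 2 := by
      rw [Finset.card_insert_of_notMem (by simpa using hij), Finset.card_singleton]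
    have hcardrest : rest.card = n - 2 := by
      rw [hrest, Finset.card_sdiff_of_subset (Finset.subset_univ _), hcard2, Finset.card_univ,
        Fintype.card_fin]
    have hsplit : ∀ ω, ENNReal.ofReal (|X i ω - X j ω| * Real.exp (-l * S ω))
        = ENNReal.ofReal (|X i ω - X j ω| *
            (Real.exp (-l * X i ω) * Real.exp (-l * X j ω)))
          * ∏ k ∈ rest, ENNReal.ofReal (Real.exp (-l * X k ω)) := by
      intro ω
      have e1 : Real.exp (-l * S ω) = ∏ k, Real.exp (-l * X k ω) := by
        rw [hSdef]
        simp only []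
        rw [show -l * (∑ k, X k ω) = ∑ k, (-l * X k ω) from Finset.mul_sum _ _ _,
          Real.exp_sum]
      have e2 : (∏ k, Real.exp (-l * X k ω))
          = (∏ k ∈ rest, Real.exp (-l * X k ω)) *
            (Real.exp (-l * X i ω) * Real.exp (-l * X j ω)) := by
        have e3 : (∏ k, Real.exp (-l * X k ω))
            = (∏ k ∈ rest, Real.exp (-l * X k ω)) *
              ∏ k ∈ ({i, j} : Finset (Fin n)), Real.exp (-l * X k ω) := by
          rw [hrest]; exact (Finset.prod_sdiff (Finset.subset_univ _)).symm
        rw [e3, Finset.prod_pair hij]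
      rw [e1, e2, ← ENNReal.ofReal_prod_of_nonneg (fun k _ => (Real.exp_pos _).le),
        ← ENNReal.ofReal_mul (by positivity)]
      congr 1
      ring
    rw [lintegral_congr hsplit]
    have hps : ∀ ω, (∏ k ∈ rest, ENNReal.ofReal (Real.exp (-l * X k ω)))
        = ∏ k : {x // x ∈ rest}, ENNReal.ofReal (Real.exp (-l * X (↑k) ω)) :=
      fun ω => (Finset.prod_coe_sort _ _).symm
    have base := hindep.indepFun_finset {i, j} rest disjoint_sdiff_self_right hXm
    have hφ : Measurable fun v : {x // x ∈ ({i, j} : Finset (Fin n))} → ℝ =>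
        ENNReal.ofReal (|v ⟨i, hi⟩ - v ⟨j, hj⟩| *
          (Real.exp (-l * v ⟨i, hi⟩) * Real.exp (-l * v ⟨j, hj⟩))) := by fun_prop
    have hψ : Measurable fun v : {x // x ∈ rest} → ℝ =>
        ∏ k : {x // x ∈ rest}, ENNReal.ofReal (Real.exp (-l * v k)) :=
      Finset.measurable_prod _ fun k _ => by fun_prop
    have ind := base.comp hφ hψ
    have hm1 : Measurable fun ω => ENNReal.ofReal (|X i ω - X j ω| *
        (Real.exp (-l * X i ω) * Real.exp (-l * X j ω))) :=
      ((((hXm i).sub (hXm j)).abs.mul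
        ((Real.measurable_exp.comp ((hXm i).const_mul (-l))).mul
          (Real.measurable_exp.comp ((hXm j).const_mul (-l)))))).ennreal_ofReal
    have hm2 : Measurable fun ω => ∏ k : {x // x ∈ rest},
        ENNReal.ofReal (Real.exp (-l * X (↑k) ω)) :=
      Finset.measurable_prod _ fun k _ =>
        (Real.measurable_exp.comp ((hXm k).const_mul (-l))).ennreal_ofReal
    simp_rw [hps]
    rw [lintegral_mul_eq_lintegral_mul_lintegral_of_indepFun'' hm1.aemeasurable
      hm2.aemeasurable ind]
    have hmap2 : μ.map (fun ω => (X i ω, X j ω)) = F.prod F := by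
      rw [(indepFun_iff_map_prod_eq_prod_map_map (hXm i).aemeasurable
        (hXm j).aemeasurable).mp (hindep.indepFun hij), hlaw i, hlaw j]
    have hfac1 : ∫⁻ ω, ENNReal.ofReal (|X i ω - X j ω| *
        (Real.exp (-l * X i ω) * Real.exp (-l * X j ω))) ∂μ = T l := by
      have h0 : ∫⁻ ω, ENNReal.ofReal (|X i ω - X j ω| *
          (Real.exp (-l * X i ω) * Real.exp (-l * X j ω))) ∂μ
          = ∫⁻ q : ℝ × ℝ, ENNReal.ofReal (|q.1 - q.2| *
              (Real.exp (-l * q.1) * Real.exp (-l * q.2)))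
            ∂(μ.map (fun ω => (X i ω, X j ω))) :=
        (lintegral_map (hΦm l) ((hXm i).prodMk (hXm j))).symm
      rw [h0, hmap2, hT]
    have hfac2 : ∫⁻ ω, ∏ k : {x // x ∈ rest},
        ENNReal.ofReal (Real.exp (-l * X (↑k) ω)) ∂μ
        = ENNReal.ofReal (L l) ^ (n - 2) := by
      simp_rw [fun ω => (hps ω).symm]
      rw [lintegral_indep_prod μ X hXm hindep _ (hgm l) rest]
      rw [Finset.prod_congr rfl fun k _ => hXL l hl k, Finset.prod_const, hcardrest]
    rw [hfac1, hfac2, ← hTeq l hl]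
    have hpow : ENNReal.ofReal (L l) ^ 2 * ENNReal.ofReal (L l) ^ (n - 2)
        = ENNReal.ofReal (L l) ^ n := by
      rw [← pow_add]; congr 1; omega
    rw [mul_comm (ENNReal.ofReal (L l) ^ 2) (ENNReal.ofReal (GMD l)), mul_assoc, hpow,
      ENNReal.ofReal_mul (hGMDnn l), ENNReal.ofReal_pow (hLnn l)]
  have hcoffc : (Finset.univ : Finset (Fin n)).offDiag.card = n * n - n := by
    rw [Finset.offDiag_card, Finset.card_univ, Fintype.card_fin]
  have hconst : ((n * n - n : ℕ) : ℝ) * (1 / c) = (n : ℝ) / 2 := by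
    have hle : n ≤ n * n := Nat.le_mul_of_pos_left n (by omega)
    have h1 : ((n * n - n : ℕ) : ℝ) = (n : ℝ) * n - n := by
      rw [Nat.cast_sub hle]; push_cast; ring
    rw [h1, hc]
    have h2 : (n : ℝ) - 1 ≠ 0 := by nlinarith
    field_simp
  have hC : ∀ l ∈ Set.Ioi (0 : ℝ),
      ∫⁻ ω, ENNReal.ofReal (A ω / c * Real.exp (-l * S ω)) ∂μ
        = ENNReal.ofReal ((n : ℝ) / 2) * ENNReal.ofReal (GMD l * L l ^ n) := by
    intro l hl
    rw [Set.mem_Ioi] at hl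
    have hmp : ∀ (i j : Fin n), Measurable fun ω =>
        ENNReal.ofReal (|X i ω - X j ω| * Real.exp (-l * S ω)) := by
      intro i j
      apply Measurable.ennreal_ofReal
      exact ((hXm i).sub (hXm j)).abs.mul (Real.measurable_exp.comp (hSm.const_mul (-l)))
    have hsum : ∀ ω, ENNReal.ofReal (A ω / c * Real.exp (-l * S ω))
        = ∑ p ∈ Finset.univ.offDiag, ENNReal.ofReal (1 / c) *
            ENNReal.ofReal (|X p.1 ω - X p.2 ω| * Real.exp (-l * S ω)) := by
      intro ω
      have h1 : A ω / c * Real.exp (-l * S ω) = ∑ p ∈ Finset.univ.offDiag,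
          (1 / c) * (|X p.1 ω - X p.2 ω| * Real.exp (-l * S ω)) := by
        rw [hA]
        simp only []
        rw [Finset.sum_div, Finset.sum_mul]
        exact Finset.sum_congr rfl fun p _ => by ring
      rw [h1, ENNReal.ofReal_sum_of_nonneg (fun p _ => by positivity)]
      exact Finset.sum_congr rfl fun p _ => ENNReal.ofReal_mul (by positivity)
    simp_rw [hsum]
    rw [lintegral_finset_sum _ (f := fun (p : Fin n × Fin n) (ω : Ω) => ENNReal.ofReal (1 / c) *
      ENNReal.ofReal (|X p.1 ω - X p.2 ω| * Real.exp (-l * S ω))) (fun p _ => measurable_const.mul (hmp p.1 p.2))]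
    have hterm : ∀ p ∈ Finset.univ.offDiag, ∫⁻ ω, ENNReal.ofReal (1 / c) *
        ENNReal.ofReal (|X p.1 ω - X p.2 ω| * Real.exp (-l * S ω)) ∂μ
        = ENNReal.ofReal (1 / c) * ENNReal.ofReal (GMD l * L l ^ n) := by
      intro p hp
      rw [lintegral_const_mul _ (hmp p.1 p.2),
        hpair l hl p.1 p.2 (Finset.mem_offDiag.mp hp).2.2]
    rw [Finset.sum_congr rfl hterm, Finset.sum_const, hcoffc, nsmul_eq_mul,
      ← ENNReal.ofReal_natCast, ← mul_assoc, ← ENNReal.ofReal_mul (by positivity), hconst]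
  have hstepA : ∀ᵐ ω ∂μ, ENNReal.ofReal (A ω / (c * S ω))
      = ∫⁻ l in Set.Ioi (0:ℝ), ENNReal.ofReal (A ω / c * Real.exp (-l * S ω)) := by
    filter_upwards [hSpos] with ω hS
    have h1 : ∀ l : ℝ, ENNReal.ofReal (A ω / c * Real.exp (-l * S ω))
        = ENNReal.ofReal (A ω / c) * ENNReal.ofReal (Real.exp (-l * S ω)) := fun l =>
      ENNReal.ofReal_mul (by positivity)
    simp_rw [h1]
    rw [lintegral_const_mul _ (show Measurable fun l : ℝ =>
      ENNReal.ofReal (Real.exp (-l * S ω)) by fun_prop)]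
    have hval : ∫ l in Set.Ioi (0:ℝ), Real.exp (-(S ω * l)) = (S ω)⁻¹ := by
      have h2 := integral_comp_mul_left_Ioi (fun x => Real.exp (-x)) 0 hS
      rw [mul_zero] at h2
      rw [h2, integral_exp_neg_Ioi, neg_zero, Real.exp_zero, smul_eq_mul, mul_one]
    have hIntJ : IntegrableOn (fun l : ℝ => Real.exp (-(S ω * l))) (Set.Ioi 0) := by
      simpa [neg_mul] using exp_neg_integrableOn_Ioi 0 hS
    have hJ : ∫⁻ l in Set.Ioi (0:ℝ), ENNReal.ofReal (Real.exp (-l * S ω))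
        = ENNReal.ofReal ((S ω)⁻¹) := by
      have h3 : ∀ l : ℝ, -l * S ω = -(S ω * l) := fun l => by ring
      simp_rw [h3]
      rw [← ofReal_integral_eq_lintegral_ofReal hIntJ
        (ae_of_all _ fun l => (Real.exp_pos _).le), hval]
    rw [hJ, ← ENNReal.ofReal_mul (by positivity)]
    congr 1
    field_simp
  have hum : Measurable fun p : Ω × ℝ =>
      ENNReal.ofReal (A p.1 / c * Real.exp (-p.2 * S p.1)) := by
    apply Measurable.ennreal_ofReal
    exact ((hAm.comp measurable_fst).div_const c).mul
      (Real.measurable_exp.comp ((measurable_snd.neg).mul (hSm.comp measurable_fst)))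
  have hswap : ∫⁻ ω, (∫⁻ l in Set.Ioi (0:ℝ),
      ENNReal.ofReal (A ω / c * Real.exp (-l * S ω))) ∂μ
      = ∫⁻ l in Set.Ioi (0:ℝ), ∫⁻ ω, ENNReal.ofReal (A ω / c * Real.exp (-l * S ω)) ∂μ :=
    lintegral_lintegral_swap hum.aemeasurable
  have hGLmeas : AEMeasurable (fun l => ENNReal.ofReal (GMD l * L l ^ n))
      (volume.restrict (Set.Ioi 0)) :=
    ENNReal.measurable_ofReal.comp_aemeasurable hint'.aestronglyMeasurable.aemeasurable
  have hLHSlin : ∫⁻ ω, ENNReal.ofReal (A ω / (c * S ω)) ∂μ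
      = ENNReal.ofReal ((n : ℝ) / 2) * ∫⁻ l in Set.Ioi (0:ℝ),
          ENNReal.ofReal (GMD l * L l ^ n) := by
    rw [lintegral_congr_ae hstepA, hswap,
      setLIntegral_congr_fun measurableSet_Ioi hC,
      lintegral_const_mul'' _ hGLmeas]
  have hRHSeq : ∫ l in Set.Ioi (0:ℝ), GMD l * L l ^ n
      = (∫⁻ l in Set.Ioi (0:ℝ), ENNReal.ofReal (GMD l * L l ^ n)).toReal := by
    rw [integral_eq_lintegral_of_nonneg_ae
      (ae_of_all _ fun l => mul_nonneg (hGMDnn l) (pow_nonneg (hLnn l) n))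
      hint'.aestronglyMeasurable]
  have hLHSeq : ∫ ω, A ω / (c * S ω) ∂μ
      = (∫⁻ ω, ENNReal.ofReal (A ω / (c * S ω)) ∂μ).toReal := by
    refine integral_eq_lintegral_of_nonneg_ae ?_ ?_
    · filter_upwards [hSpos] with ω hS
      have := hAnn ω
      positivity
    · exact (hAm.div (hSm.const_mul c)).aestronglyMeasurable
  have final : ∫ ω, A ω / (c * S ω) ∂μ
      = ((n : ℝ) / 2) * ∫ l in Set.Ioi (0:ℝ), GMD l * L l ^ n := by
    rw [hLHSeq, hLHSlin, hRHSeq, ENNReal.toReal_mul, ENNReal.toReal_ofReal (by positivity)]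
  exact final
end
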